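/- Let d ≥ 1 and let W0 and Ŵ be real (d+2)×(d+2) matrices. Let q1 ≠ q2 be indices in {0,…,d+1} and suppose q1 is not an ancestor of q2 in the directed graph associated with W0. Then (Ŵ*)_{q2,q1} ≤ max_{i,j} |Ŵ_{i,j} − (W0)_{i,j}|, where Ŵ* = |Ŵ|^{(1)} ⊕ |Ŵ|^{(2)} ⊕ ⋯ ⊕ |Ŵ|^{(d)} and the maximum on the right is over all entries. -/

import Mathlib

/-- Edge relation of the directed graph associated with a square real matrix `W`:
there is an edge `i → j` iff `W j i ≠ 0`. -/
def edgeRel {n : ℕ} (W : Matrix (Fin n) (Fin n) ℝ) : Fin n → Fin n → Prop :=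
  fun i j => W j i ≠ 0

/-- `f : Fin (k+1) → V` is a `k`-step directed path from `i` to `j` for the relation `R`:
a sequence of pairwise distinct vertices joined by edges. -/
def IsPathFn {V : Type*} (R : V → V → Prop) {k : ℕ} (f : Fin (k + 1) → V) (i j : V) : Prop :=
  Function.Injective f ∧ f 0 = i ∧ f (Fin.last k) = j ∧
    ∀ t : Fin k, R (f t.castSucc) (f t.succ)

/-- There is a `k`-step directed path from `i` to `j`. -/
def IsPathLen {V : Type*} (R : V → V → Prop) (k : ℕ) (i j : V) : Prop :=
  ∃ f : Fin (k + 1) → V, IsPathFn R f i j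

/-- `i` is an ancestor of `j`: there is a `k`-step directed path from `i` to `j`
for some `k ≥ 1`. -/
def IsAncestor {V : Type*} (R : V → V → Prop) (i j : V) : Prop :=
  ∃ k : ℕ, 1 ≤ k ∧ IsPathLen R k i j

/-- The directed graph with edge relation `R` is acyclic: no vertex is an ancestor
of itself. -/
def IsAcyclicRel {V : Type*} (R : V → V → Prop) : Prop :=
  ∀ v : V, ¬ IsAncestor R v v

/-- Max–min (Boolean-logic) matrix product: the `(i,j)` entry of `mmMul A B` is
`max_k min (A i k) (B k j)`. -/
noncomputable def mmMul {p q r : ℕ} (A : Matrix (Fin p) (Fin q) ℝ)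
    (B : Matrix (Fin q) (Fin r) ℝ) : Matrix (Fin p) (Fin r) ℝ :=
  Matrix.of fun i j => ⨆ k : Fin q, min (A i k) (B k j)

/-- Max–min matrix power: `A^{(1)} = A` and `A^{(k)} = A^{(k-1)} ⊗ A` for `k ≥ 2`.
(The value at `0` is junk.) -/
noncomputable def mmPow {n : ℕ} (A : Matrix (Fin n) (Fin n) ℝ) :
    ℕ → Matrix (Fin n) (Fin n) ℝ
  | 0 => A
  | 1 => A
  | (k + 2) => mmMul (mmPow A (k + 1)) A

/-- Entrywise maximum `A ⊕ B` of two matrices of the same size. -/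
def mSup {m n : ℕ} (A B : Matrix (Fin m) (Fin n) ℝ) : Matrix (Fin m) (Fin n) ℝ :=
  Matrix.of fun i j => max (A i j) (B i j)

/-- The aggregate `A^{(1)} ⊕ A^{(2)} ⊕ ⋯ ⊕ A^{(d)}` of the max–min powers of `A`. -/
noncomputable def mStar {n : ℕ} (d : ℕ) (A : Matrix (Fin n) (Fin n) ℝ) :
    Matrix (Fin n) (Fin n) ℝ :=
  Matrix.of fun i j => ⨆ k : Fin d, mmPow A (k.val + 1) i j

/-- Entrywise absolute value of a matrix. -/
def mAbs {m n : ℕ} (A : Matrix (Fin m) (Fin n) ℝ) : Matrix (Fin m) (Fin n) ℝ :=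
  Matrix.of fun i j => |A i j|


/-!
If `(Ŵ*)_{q2,q1} > ε := max |Ŵ - W0|`, then some max–min power `|Ŵ|^{(k)}` has its
`(q2,q1)` entry above `ε`, so there is a walk `q2 → ⋯ → q1` all of whose steps `x → y`
have `|Ŵ_{x,y}| > ε`, hence `(W0)_{x,y} ≠ 0`. Reversed, this is a walk from `q1` to `q2`
in the graph of `W0`; cutting out its cycles leaves a directed path, so `q1` would be an
ancestor of `q2`.
-/

section Paths

variable {V : Type*} {R : V → V → Prop}

theorem isPathLen_of_isChain_of_nodup {a : V} {l : List V} (hc : (a :: l).IsChain R)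
    (hnd : (a :: l).Nodup) :
    IsPathLen R l.length a ((a :: l).getLast (List.cons_ne_nil a l)) := by
  refine ⟨fun t => (a :: l)[t], ?_, rfl, ?_, fun t => ?_⟩
  · exact List.nodup_iff_injective_getElem.mp hnd
  · simp [List.getLast_eq_getElem]
  · exact List.isChain_iff_getElem.mp hc t (by simp)

theorem exists_nodup_isChain_of_reflTransGen {a b : V} (h : Relation.ReflTransGen R a b) :
    ∃ l : List V, (a :: l).IsChain R ∧ (a :: l).Nodup ∧
      (a :: l).getLast (List.cons_ne_nil a l) = b := by
  induction h using Relation.ReflTransGen.head_induction_on with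
  | refl => exact ⟨[], .singleton _, List.nodup_singleton _, rfl⟩
  | @head a c hac _ ih =>
    obtain ⟨l, hc, hnd, hlast⟩ := ih
    by_cases ha : a ∈ c :: l
    · -- cut out the cycle through `a`
      obtain ⟨s, t, hst⟩ := List.append_of_mem ha
      have hsuffix : (a :: t) <:+ c :: l := hst ▸ List.suffix_append s (a :: t)
      refine ⟨t, hc.infix hsuffix.isInfix, hnd.sublist hsuffix.sublist, ?_⟩
      rw [← hlast]
      simp [hst]
    · exact ⟨c :: l, hc.cons_cons hac, List.nodup_cons.mpr ⟨ha, hnd⟩, by simpa using hlast⟩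

theorem isAncestor_of_transGen {a b : V} (h : Relation.TransGen R a b) (hab : a ≠ b) :
    IsAncestor R a b := by
  obtain ⟨l, hc, hnd, rfl⟩ := exists_nodup_isChain_of_reflTransGen h.to_reflTransGen
  have hl : l ≠ [] := by
    rintro rfl
    exact hab rfl
  exact ⟨l.length, List.length_pos_iff.mpr hl, isPathLen_of_isChain_of_nodup hc hnd⟩

end Paths

theorem transGen_of_lt_mmPow {n : ℕ} {A : Matrix (Fin n) (Fin n) ℝ} {c : ℝ} {i j : Fin n}
    {m : ℕ} (h : c < mmPow A (m + 1) i j) : Relation.TransGen (fun x y => c < A x y) i j := by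
  have : Nonempty (Fin n) := ⟨i⟩
  induction m generalizing j with
  | zero => exact .single h
  | succ m ih =>
    obtain ⟨k, hk⟩ := exists_lt_of_lt_ciSup h
    obtain ⟨hik, hkj⟩ := lt_min_iff.mp hk
    exact (ih hik).tail hkj

theorem stmt_9_general (d : ℕ) (W0 What : Matrix (Fin (d + 2)) (Fin (d + 2)) ℝ)
    (q1 q2 : Fin (d + 2)) (hne : q1 ≠ q2)
    (hnull : ¬ IsAncestor (edgeRel W0) q1 q2) :
    mStar d (mAbs What) q2 q1 ≤
      ⨆ p : Fin (d + 2) × Fin (d + 2), |What p.1 p.2 - W0 p.1 p.2| := by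
  set ε := ⨆ p : Fin (d + 2) × Fin (d + 2), |What p.1 p.2 - W0 p.1 p.2|
  have hε : ∀ x y, |What x y - W0 x y| ≤ ε := fun x y =>
    le_ciSup (f := fun p : Fin (d + 2) × Fin (d + 2) => |What p.1 p.2 - W0 p.1 p.2|)
      (Finite.bddAbove_range _) (x, y)
  refine Real.iSup_le (fun k => ?_) ((abs_nonneg _).trans (hε q1 q1))
  by_contra! hk
  have hedge : ∀ x y, ε < |What x y| → edgeRel W0 y x := fun x y hxy h0 =>
    (hε x y).not_gt (by rwa [h0, sub_zero])
  have hwalk := Relation.TransGen.mono hedge q2 q1 (transGen_of_lt_mmPow hk)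
  exact hnull (isAncestor_of_transGen (Relation.TransGen.swap q1 q2 hwalk) hne)

/-- If `q1` is not an ancestor of `q2` in the graph associated with
`W0`, then the `(q2,q1)` entry of `Ŵ* = |Ŵ|^{(1)} ⊕ ⋯ ⊕ |Ŵ|^{(d)}` is bounded by the
maximal entrywise deviation `max_{i,j} |Ŵ_{i,j} - (W0)_{i,j}|`. -/
theorem stmt_9 (d : ℕ) (hd : 1 ≤ d) (W0 What : Matrix (Fin (d + 2)) (Fin (d + 2)) ℝ)
    (q1 q2 : Fin (d + 2)) (hne : q1 ≠ q2)
    (hnull : ¬ IsAncestor (edgeRel W0) q1 q2) :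
    mStar d (mAbs What) q2 q1 ≤
      ⨆ p : Fin (d + 2) × Fin (d + 2), |What p.1 p.2 - W0 p.1 p.2| :=
  stmt_9_general d W0 What q1 q2 hne hnull
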